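/- The left normalizer of the left center of the right-symmetric Witt algebra W_n^+ over a field of characteristic 0 consists exactly of the vector fields with affine coefficients: a vector field a ∈ W_n^+ satisfies a ∘ z ∈ Z(W_n^+) for all z ∈ Z(W_n^+) if and only if every component polynomial a_i has total degree at most 1. -/

import Mathlib

/-- The multiplication of the right-symmetric Witt algebra `W_n^+`:
`(a ∘ b)_i = ∑ j, b_j * ∂_j (a_i)`. -/
noncomputable def wmul {K : Type*} [CommSemiring K] {n : ℕ}
    (a b : Fin n → MvPolynomial (Fin n) K) : Fin n → MvPolynomial (Fin n) K :=
  fun i => ∑ j, b j * MvPolynomial.pderiv j (a i)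

/-!
The left center of `W_n^+` consists of the constant vector fields: testing `z ∘ b = 0` against
`b = ∂_k` gives `∂_k z_i = 0`. For constant `z`, `(a ∘ z)_i = ∑_k z_k ∂_k a_i`, so `a ∘ z` is central
for all constant `z` exactly when all second partial derivatives of every `a_i` vanish (take
`z = ∂_k`), which in characteristic zero means that every `a_i` is affine.
-/

open MvPolynomial Finsupp

theorem Finsupp.exists_eq_add_single_one {σ : Type*} {s : σ →₀ ℕ} (hs : s ≠ 0) :
    ∃ t k, s = t + single k 1 := by
  obtain ⟨k, hk⟩ := Finsupp.ne_iff.mp hs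
  exact ⟨s - single k 1, k, (sub_add_single_one_cancel hk).symm⟩

theorem Finsupp.exists_eq_add_single_one_add_single_one {σ : Type*} {s : σ →₀ ℕ}
    (hs : 2 ≤ degree s) : ∃ u j k, s = u + single j 1 + single k 1 := by
  obtain ⟨t, k, rfl⟩ := exists_eq_add_single_one (s := s) (by rintro rfl; simp at hs)
  have ht : t ≠ 0 := by rintro rfl; simp at hs
  obtain ⟨u, j, rfl⟩ := exists_eq_add_single_one ht
  exact ⟨u, j, k, rfl⟩

theorem MvPolynomial.totalDegree_le_one_iff_pderiv_pderiv_eq_zero {σ R : Type*}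
    [CommSemiring R] [NoZeroDivisors R] [CharZero R] (p : MvPolynomial σ R) :
    p.totalDegree ≤ 1 ↔ ∀ j k, pderiv j (pderiv k p) = 0 := by
  classical
  refine ⟨fun h j k => ?_, fun h => Finset.sup_le fun s hs => ?_⟩
  · ext m
    rw [coeff_pderiv, coeff_pderiv, coeff_eq_zero_of_totalDegree_lt, zero_mul, zero_mul,
      coeff_zero]
    change _ < degree (m + single j 1 + single k 1)
    simp only [map_add, degree_single]
    omega
  · change degree s ≤ 1
    by_contra! hs2
    obtain ⟨u, j, k, rfl⟩ := exists_eq_add_single_one_add_single_one hs2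
    have hcoeff := congr(coeff u $(h j k))
    rw [coeff_pderiv, coeff_pderiv, coeff_zero, mul_assoc] at hcoeff
    exact mem_support_iff.mp hs <| (mul_eq_zero.mp hcoeff).resolve_right <|
      mul_ne_zero (Nat.cast_add_one_ne_zero _) (Nat.cast_add_one_ne_zero _)

section WittAlgebra

variable {K : Type*} [CommSemiring K] {n : ℕ}

theorem wmul_single_one (a : Fin n → MvPolynomial (Fin n) K) (k : Fin n) :
    wmul a (Pi.single k 1) = fun i => pderiv k (a i) := by
  funext i
  simp [wmul, Pi.single_apply]

theorem forall_wmul_eq_zero_iff (z : Fin n → MvPolynomial (Fin n) K) :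
    (∀ b, wmul z b = 0) ↔ ∀ i k, pderiv k (z i) = 0 := by
  refine ⟨fun h i k => ?_, fun h b => ?_⟩
  · simpa [wmul_single_one] using congrFun (h (Pi.single k 1)) i
  · funext i
    simp [wmul, h]

end WittAlgebra

theorem wittRsym_normalizer_of_center_general {K : Type*} [Field K] [CharZero K] {n : ℕ}
    (a : Fin n → MvPolynomial (Fin n) K) :
    (∀ z : Fin n → MvPolynomial (Fin n) K,
        (∀ b : Fin n → MvPolynomial (Fin n) K, wmul z b = 0) →
        ∀ b : Fin n → MvPolynomial (Fin n) K, wmul (wmul a z) b = 0) ↔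
      ∀ i, (a i).totalDegree ≤ 1 := by
  simp_rw [forall_wmul_eq_zero_iff, totalDegree_le_one_iff_pderiv_pderiv_eq_zero]
  constructor
  · intro h i j k
    have hconst : ∀ i l, pderiv l ((Pi.single k 1 : Fin n → MvPolynomial (Fin n) K) i) = 0 := by
      intro i l
      rcases eq_or_ne i k with rfl | hik <;> simp [*]
    simpa [wmul_single_one] using h (Pi.single k 1) hconst i j
  · intro h z hz i j
    simp [wmul, hz, h]

/-- the left normalizer of the left center of `W_n^+` (char 0) consists
exactly of the vector fields with affine coefficients: `a ∘ z ∈ Z(W_n^+)` for all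
`z ∈ Z(W_n^+)` iff every component `a_i` has total degree at most 1. -/
theorem wittRsym_normalizer_of_center {K : Type*} [Field K] [CharZero K] {n : ℕ} (hn : 1 ≤ n)
    (a : Fin n → MvPolynomial (Fin n) K) :
    (∀ z : Fin n → MvPolynomial (Fin n) K,
        (∀ b : Fin n → MvPolynomial (Fin n) K, wmul z b = 0) →
        ∀ b : Fin n → MvPolynomial (Fin n) K, wmul (wmul a z) b = 0) ↔
      ∀ i, (a i).totalDegree ≤ 1 :=
  wittRsym_normalizer_of_center_general a
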